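/- (Characterization of polytopes in ℜ₁.) Let ℜ₀ be a finite family of polytopes in ℝ^N satisfying (H1) and (H2), with 1 < r_min < R. Then a polytope Ω belongs to ℜ₁ = F(ℜ₀) if and only if there exist k with 0 ≤ k < r_min and a direction d ∈ S with a d-compatible enumeration {x′_i}_{i=1}^R of E such that Ω = conv(E \ {x′_1,…,x′_k}) (with {x′_1,…,x′_k} = ∅ when k = 0) and ⟨x′_k,d⟩ < ⟨x′_{k+1},d⟩ = ⋯ = ⟨x′_{r_min},d⟩ when k ≥ 1, respectively card(F(C,d) ∩ E) ≥ r_min when k = 0. -/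

import Mathlib

open scoped RealInnerProductSpace
open Set

noncomputable section

/-- The ambient Euclidean space `ℝ^N`. -/
abbrev Euc (N : ℕ) : Type := EuclideanSpace ℝ (Fin N)

/-- A polytope: a nonempty convex compact subset of `ℝ^N` with finitely many extreme points. -/
def IsPolytope {N : ℕ} (Ω : Set (Euc N)) : Prop :=
  Ω.Nonempty ∧ Convex ℝ Ω ∧ IsCompact Ω ∧ (Set.extremePoints ℝ Ω).Finite

/-- The unit sphere `S` of `ℝ^N`. -/
def sph (N : ℕ) : Set (Euc N) := Metric.sphere (0 : Euc N) 1

/-- `E(Ω,d)`: the set of `d`-active extreme points of `Ω`. -/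
def activeExt {N : ℕ} (Ω : Set (Euc N)) (d : Euc N) : Set (Euc N) :=
  {x ∈ Set.extremePoints ℝ Ω | ∀ y ∈ Ω, ⟪y, d⟫ ≤ ⟪x, d⟫}

/-- `Ω_ℜ(d) = conv (⋃_{Ω ∈ ℜ} E(Ω,d))`, the dual polytope of the family `ℜ` in direction `d`. -/
def dualPoly {N : ℕ} (ℛ : Set (Set (Euc N))) (d : Euc N) : Set (Euc N) :=
  convexHull ℝ (⋃ Ω ∈ ℛ, activeExt Ω d)

/-- The dual family `F(ℜ) = {Ω_ℜ(d) : d ∈ S}`. -/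
def dualFam {N : ℕ} (ℛ : Set (Set (Euc N))) : Set (Set (Euc N)) :=
  dualPoly ℛ '' sph N

/-- `E_ℜ`, the set of extreme points of all polytopes of the family `ℜ`. -/
def extFam {N : ℕ} (ℛ : Set (Set (Euc N))) : Set (Euc N) :=
  ⋃ Ω ∈ ℛ, Set.extremePoints ℝ Ω

/-- The face `F(Ω,d)` of `Ω` in direction `d` (the set of minimizers of `⟨·,d⟩` on `Ω`). -/
def face {N : ℕ} (Ω : Set (Euc N)) (d : Euc N) : Set (Euc N) :=
  {x ∈ Ω | ∀ z ∈ Ω, ⟪x, d⟫ ≤ ⟪z, d⟫}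

/-- A `d`-compatible enumeration of a finite set `E` of cardinality `R`:
an enumeration `x 0, x 1, …, x (R-1)` of `E` with `⟪x 0, d⟫ ≤ ⟪x 1, d⟫ ≤ ⋯ ≤ ⟪x (R-1), d⟫`. -/
def IsCompatEnum {N : ℕ} (E : Set (Euc N)) (R : ℕ) (d : Euc N) (x : ℕ → Euc N) : Prop :=
  Set.InjOn x (Set.Iio R) ∧ x '' (Set.Iio R) = E ∧
    ∀ i j : ℕ, i ≤ j → j < R → ⟪x i, d⟫ ≤ ⟪x j, d⟫

/-!
A point `x ∈ E` is `d`-active in some member of `ℜ₀` iff at least `r_min` points of `E` lie at or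
below `x` in direction `d`: every member contains at least `r_min` points of `E`, all below its
active vertex; conversely, by (H2) the hull of `x` and `r_min - 1` points below it is a member
of `ℜ₀`, in which `x` is `d`-maximal and, by (H1), extreme. Hence `Ω_ℜ₀(d)` is the hull of the
points of `E` at or above the level of the `r_min`-th point of a `d`-compatible enumeration, that
is, of `E` minus the points strictly below that level. These are the first `k` points of the
enumeration, `k` being the first index on that level.
-/

section ExtremePoints

variable {V : Type*} [AddCommGroup V] [Module ℝ V] [TopologicalSpace V] [T2Space V]
  [IsTopologicalAddGroup V] [ContinuousSMul ℝ V] [LocallyConvexSpace ℝ V]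

/-- By Krein–Milman, `conv A` is the hull of its extreme points, which all lie in `A`. -/
theorem mem_extremePoints_convexHull_of_notMem_convexHull_sdiff {A : Set V} (hA : A.Finite)
    {x : V} (hxA : x ∈ A) (hx : x ∉ convexHull ℝ (A \ {x})) :
    x ∈ (convexHull ℝ A).extremePoints ℝ := by
  by_contra hext
  have hsub : (convexHull ℝ A).extremePoints ℝ ⊆ A \ {x} := fun y hy =>
    ⟨extremePoints_convexHull_subset hy, fun hyx => hext (hyx ▸ hy)⟩
  apply hx
  rw [← ((hA.sdiff (t := {x})).isClosed_convexHull ℝ).closure_eq]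
  refine closure_mono (convexHull_mono hsub) ?_
  rw [closure_convexHull_extremePoints (hA.isCompact_convexHull ℝ) (convex_convexHull ℝ A)]
  exact subset_convexHull ℝ A hxA

end ExtremePoints

section InnerHalfSpace

variable {F : Type*} [NormedAddCommGroup F] [InnerProductSpace ℝ F]

theorem inner_le_of_mem_convexHull {s : Set F} {d z : F} {c : ℝ} (h : ∀ y ∈ s, ⟪y, d⟫ ≤ c)
    (hz : z ∈ convexHull ℝ s) : ⟪z, d⟫ ≤ c :=
  convexHull_min h (convex_halfSpace_le ((innerₗ F).flip d).isLinear c) hz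

theorem le_inner_of_mem_convexHull {s : Set F} {d z : F} {c : ℝ} (h : ∀ y ∈ s, c ≤ ⟪y, d⟫)
    (hz : z ∈ convexHull ℝ s) : c ≤ ⟪z, d⟫ :=
  convexHull_min h (convex_halfSpace_ge ((innerₗ F).flip d).isLinear c) hz

end InnerHalfSpace

variable {N : ℕ}

def dirRank (E : Set (Euc N)) (d x : Euc N) : ℕ :=
  {y ∈ E | ⟪y, d⟫ ≤ ⟪x, d⟫}.ncard

theorem extFam_finite {ℛ : Set (Set (Euc N))} (hfin : ℛ.Finite) (hpoly : ∀ Ω ∈ ℛ, IsPolytope Ω) :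
    (extFam ℛ).Finite :=
  hfin.biUnion fun Ω hΩ => (hpoly Ω hΩ).2.2.2

theorem le_dirRank_of_mem_activeExt {E Ω : Set (Euc N)} (hE : E.Finite) {r : ℕ}
    (hΩ : r ≤ (Ω ∩ E).ncard) {d x : Euc N} (hx : x ∈ activeExt Ω d) : r ≤ dirRank E d x :=
  hΩ.trans (Set.ncard_le_ncard (fun y hy => ⟨hy.2, hx.2 y hy.1⟩) (hE.subset (sep_subset _ _)))

theorem exists_ncard_eq_mem_activeExt_convexHull {E : Set (Euc N)} (hE : E.Finite)
    (hind : ∀ x ∈ E, x ∉ convexHull ℝ (E \ {x})) {r : ℕ} (hr : 0 < r) {d x : Euc N}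
    (hx : x ∈ E) (hrank : r ≤ dirRank E d x) :
    ∃ A ⊆ E, A.ncard = r ∧ x ∈ activeExt (convexHull ℝ A) d := by
  obtain ⟨A, hxA, hAbelow, hAcard⟩ := Set.exists_subsuperset_card_eq
    (show {x} ⊆ {y ∈ E | ⟪y, d⟫ ≤ ⟪x, d⟫} from singleton_subset_iff.2 ⟨hx, le_rfl⟩)
    (by rwa [ncard_singleton]) hrank
  have hAE : A ⊆ E := fun y hy => (hAbelow hy).1
  have hxA : x ∈ A := singleton_subset_iff.1 hxA
  refine ⟨A, hAE, hAcard, ?_,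
    fun y hy => inner_le_of_mem_convexHull (fun z hz => (hAbelow hz).2) hy⟩
  exact mem_extremePoints_convexHull_of_notMem_convexHull_sdiff (hE.subset hAE) hxA
    fun h => hind x hx (convexHull_mono (sdiff_subset_sdiff_left hAE) h)

theorem biUnion_activeExt_eq {ℛ : Set (Set (Euc N))} (hE : (extFam ℛ).Finite) {r : ℕ} (hr : 0 < r)
    (hlb : ∀ Ω ∈ ℛ, r ≤ (Ω ∩ extFam ℛ).ncard)
    (hind : ∀ x ∈ extFam ℛ, x ∉ convexHull ℝ (extFam ℛ \ {x}))
    (hsub : ∀ A ⊆ extFam ℛ, A.ncard = r → convexHull ℝ A ∈ ℛ) (d : Euc N) :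
    ⋃ Ω ∈ ℛ, activeExt Ω d = {x ∈ extFam ℛ | r ≤ dirRank (extFam ℛ) d x} := by
  ext x
  simp only [mem_iUnion, exists_prop, mem_ofPred_eq]
  constructor
  · rintro ⟨Ω, hΩ, hx⟩
    exact ⟨mem_biUnion hΩ hx.1, le_dirRank_of_mem_activeExt hE (hlb Ω hΩ) hx⟩
  · rintro ⟨hx, hrank⟩
    obtain ⟨A, hAE, hAcard, hxA⟩ := exists_ncard_eq_mem_activeExt_convexHull hE hind hr hx hrank
    exact ⟨_, hsub A hAE hAcard, hxA⟩

theorem isCompatEnum_of_fin {R : ℕ} {d : Euc N} {g : Fin R → Euc N} (hg : Function.Injective g)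
    (hmono : Monotone fun i => ⟪g i, d⟫) :
    IsCompatEnum (range g) R d fun n => if h : n < R then g ⟨n, h⟩ else 0 := by
  refine ⟨fun i hi j hj hij => ?_, ?_, fun i j hij hj => ?_⟩
  · simp only [dif_pos (mem_Iio.1 hi), dif_pos (mem_Iio.1 hj)] at hij
    exact Fin.mk.inj_iff.1 (hg hij)
  · ext y
    constructor
    · rintro ⟨n, hn, rfl⟩
      simp only [dif_pos (mem_Iio.1 hn), mem_range_self]
    · rintro ⟨i, rfl⟩
      exact ⟨i, i.2, dif_pos i.2⟩
  · simp only [dif_pos hj, dif_pos (hij.trans_lt hj)]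
    exact hmono (Fin.mk_le_mk.2 hij)

theorem exists_isCompatEnum {E : Set (Euc N)} (hE : E.Finite) (d : Euc N) :
    ∃ x : ℕ → Euc N, IsCompatEnum E E.ncard d x := by
  have := hE.to_subtype
  let e : Fin E.ncard ≃ E := (finCongr (Nat.card_coe_set_eq E).symm).trans (Finite.equivFin E).symm
  let f : Fin E.ncard → Euc N := fun i => e i
  let σ := Tuple.sort fun i => ⟪f i, d⟫
  have hrange : range (f ∘ σ) = E := by
    rw [σ.surjective.range_comp, range_comp' Subtype.val, e.surjective.range_eq, image_univ,
      Subtype.range_coe]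
  have he := isCompatEnum_of_fin (g := f ∘ σ)
    (Subtype.val_injective.comp (e.injective.comp σ.injective))
    (Tuple.monotone_sort fun i => ⟪f i, d⟫)
  rw [hrange] at he
  exact ⟨_, he⟩

theorem exists_le_and_forall_lt {α : Type*} [LinearOrder α] (f : ℕ → α) (n : ℕ) :
    ∃ k ≤ n, f n ≤ f k ∧ ∀ j < k, f j < f k := by
  classical
  have hex : ∃ k, f n ≤ f k := ⟨n, le_rfl⟩
  exact ⟨Nat.find hex, Nat.find_min' hex le_rfl, Nat.find_spec hex,
    fun j hj => (not_le.1 (Nat.find_min hex hj)).trans_le (Nat.find_spec hex)⟩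

namespace IsCompatEnum

variable {E : Set (Euc N)} {R : ℕ} {d : Euc N} {x : ℕ → Euc N}

theorem mem (he : IsCompatEnum E R d x) {i : ℕ} (hi : i < R) : x i ∈ E :=
  he.2.1 ▸ mem_image_of_mem x hi

theorem exists_lt_eq (he : IsCompatEnum E R d x) {y : Euc N} (hy : y ∈ E) :
    ∃ i < R, x i = y := by
  rw [← he.2.1] at hy
  exact hy

theorem mono (he : IsCompatEnum E R d x) {i j : ℕ} (hij : i ≤ j) (hj : j < R) :
    ⟪x i, d⟫ ≤ ⟪x j, d⟫ :=
  he.2.2 i j hij hj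

theorem le_dirRank_iff (he : IsCompatEnum E R d x) {r : ℕ} (hr : 0 < r) (hrR : r ≤ R)
    (y : Euc N) : r ≤ dirRank E d y ↔ ⟪x (r - 1), d⟫ ≤ ⟪y, d⟫ := by
  constructor
  · intro hrank
    by_contra! hlt
    have hbelow : {z ∈ E | ⟪z, d⟫ ≤ ⟪y, d⟫} ⊆ x '' Iio (r - 1) := by
      rintro z ⟨hz, hzy⟩
      obtain ⟨m, hm, rfl⟩ := he.exists_lt_eq hz
      refine ⟨m, mem_Iio.2 (not_le.1 fun hrm => ?_), rfl⟩
      exact (hzy.trans_lt hlt).not_ge (he.mono hrm hm)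
    have := (Set.ncard_le_ncard hbelow ((finite_Iio _).image x)).trans
      (Set.ncard_image_le (finite_Iio _))
    rw [ncard_Iio_nat] at this
    exact absurd (hrank.trans this) (by omega)
  · intro hle
    have hinj : InjOn x (Iio r) := he.1.mono (Iio_subset_Iio hrR)
    calc r = (x '' Iio r).ncard := by rw [hinj.ncard_image, ncard_Iio_nat]
      _ ≤ dirRank E d y := by
        refine Set.ncard_le_ncard ?_ ((he.2.1 ▸ (finite_Iio R).image x).subset (sep_subset _ _))
        rintro _ ⟨j, hj, rfl⟩
        exact ⟨he.mem (lt_of_lt_of_le hj hrR),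
          (he.mono (Nat.le_sub_one_of_lt hj) (by omega)).trans hle⟩

theorem sep_le_dirRank_eq_sdiff (he : IsCompatEnum E R d x) {r k : ℕ} (hrR : r ≤ R) (hk : k < r)
    (hfirst : ∀ j < k, ⟪x j, d⟫ < ⟪x k, d⟫) (hlevel : ⟪x (r - 1), d⟫ ≤ ⟪x k, d⟫) :
    {y ∈ E | r ≤ dirRank E d y} = E \ x '' Iio k := by
  have hr : 0 < r := by omega
  have hk_le : ⟪x k, d⟫ ≤ ⟪x (r - 1), d⟫ := he.mono (by omega) (by omega)
  ext y
  simp only [mem_ofPred_eq, mem_sdiff, he.le_dirRank_iff hr hrR]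
  refine ⟨fun ⟨hy, hle⟩ => ⟨hy, ?_⟩, fun ⟨hy, hnot⟩ => ⟨hy, ?_⟩⟩
  · rintro ⟨j, hj, rfl⟩
    exact (hle.trans_lt ((hfirst j hj).trans_le hk_le)).false
  · obtain ⟨i, hi, rfl⟩ := he.exists_lt_eq hy
    have hki : k ≤ i := not_lt.1 fun hik => hnot ⟨i, hik, rfl⟩
    exact hlevel.trans (he.mono hki hi)

theorem ncard_face_convexHull_inter (he : IsCompatEnum E R d x) (hR : 0 < R) :
    (face (convexHull ℝ E) d ∩ E).ncard = dirRank E d (x 0) := by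
  have hmin : ∀ z ∈ E, ⟪x 0, d⟫ ≤ ⟪z, d⟫ := fun z hz => by
    obtain ⟨m, hm, rfl⟩ := he.exists_lt_eq hz
    exact he.mono (Nat.zero_le m) hm
  congr 1
  ext y
  refine ⟨fun ⟨⟨_, hface⟩, hy⟩ => ⟨hy, hface _ (subset_convexHull ℝ E (he.mem hR))⟩,
    fun ⟨hy, hle⟩ => ⟨⟨subset_convexHull ℝ E hy, fun z hz => ?_⟩, hy⟩⟩
  exact le_inner_of_mem_convexHull (fun w hw => hle.trans (hmin w hw)) hz

end IsCompatEnum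

/-- Indices of the enumeration are 0-based: the paper's `x′_1,…,x′_k` is
`x' 0, …, x' (k-1)` here. -/
theorem dual_family_characterization {N : ℕ} (ℛ₀ : Set (Set (Euc N))) (hfin : ℛ₀.Finite)
    (hpoly : ∀ Ω ∈ ℛ₀, IsPolytope Ω)
    (E : Set (Euc N)) (hE : E = extFam ℛ₀) (R : ℕ) (hR : R = E.ncard)
    (C : Set (Euc N)) (hC : C = convexHull ℝ E)
    (rmin : ℕ) (hrmin : IsLeast {r : ℕ | ∃ Ω ∈ ℛ₀, r = (Ω ∩ E).ncard} rmin)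
    (hrmin1 : 1 < rmin) (hrminR : rmin < R)
    (H1 : ∀ x ∈ E, x ∉ convexHull ℝ (E \ {x}))
    (H2 : ∀ A ⊆ E, A.ncard = rmin → convexHull ℝ A ∈ ℛ₀)
    (Ω : Set (Euc N)) :
    Ω ∈ dualFam ℛ₀ ↔
      ∃ k < rmin, ∃ d ∈ sph N, ∃ x' : ℕ → Euc N, IsCompatEnum E R d x' ∧
        Ω = convexHull ℝ (E \ x' '' (Set.Iio k)) ∧
        (1 ≤ k → (∀ j < k, ⟪x' j, d⟫ < ⟪x' k, d⟫) ∧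
          (∀ j : ℕ, k ≤ j → j < rmin → ⟪x' j, d⟫ = ⟪x' k, d⟫)) ∧
        (k = 0 → rmin ≤ ((face C d) ∩ E).ncard) := by
  subst hE hR hC
  have hr : 0 < rmin := by omega
  have hEfin := extFam_finite hfin hpoly
  have hdual (d : Euc N) : dualPoly ℛ₀ d =
      convexHull ℝ {x ∈ extFam ℛ₀ | rmin ≤ dirRank (extFam ℛ₀) d x} :=
    congrArg _ (biUnion_activeExt_eq hEfin hr
      (fun Ω' hΩ' => hrmin.2 ⟨Ω', hΩ', rfl⟩) H1 H2 d)
  constructor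
  · rintro ⟨d, hd, rfl⟩
    obtain ⟨x', he⟩ := exists_isCompatEnum hEfin d
    obtain ⟨k, hk, hlevel, hfirst⟩ := exists_le_and_forall_lt (fun i => ⟪x' i, d⟫) (rmin - 1)
    replace hk : k < rmin := by omega
    refine ⟨k, hk, d, hd, x', he,
      by rw [hdual, he.sep_le_dirRank_eq_sdiff hrminR.le hk hfirst hlevel],
      fun _ => ⟨hfirst, fun j hkj hj => ?_⟩, fun hk0 => ?_⟩
    · exact le_antisymm ((he.mono (by omega) (by omega)).trans hlevel) (he.mono hkj (by omega))
    · subst hk0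
      rw [he.ncard_face_convexHull_inter (by omega), he.le_dirRank_iff hr hrminR.le]
      exact hlevel
  · rintro ⟨k, hk, d, hd, x', he, rfl, hpos, hzero⟩
    have hlevel : ⟪x' (rmin - 1), d⟫ ≤ ⟪x' k, d⟫ := by
      rcases Nat.eq_zero_or_pos k with rfl | hk1
      · rw [← he.le_dirRank_iff hr hrminR.le, ← he.ncard_face_convexHull_inter (by omega)]
        exact hzero rfl
      · exact ((hpos hk1).2 _ (by omega) (by omega)).le
    have hfirst : ∀ j < k, ⟪x' j, d⟫ < ⟪x' k, d⟫ := fun j hj => (hpos (by omega)).1 j hj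
    exact ⟨d, hd, by rw [hdual, he.sep_le_dirRank_eq_sdiff hrminR.le hk hfirst hlevel]⟩
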